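/- arXiv:2312.03190 — 2 statements merged into one kernel-verified Lean document; each statement's English description precedes it below -/
import Mathlib

section
/- For integers n ≥ 1, m ≥ 0 and 1 ≤ r ≤ n, the minimum of (i+m)/2 + ((n+1)/2 − r)·k̂ over all pairs (k̂, i) of integers with i ≥ 0, |k̂| ≤ (i+m)/(n+1), and (n+1)·k̂ ≡ i+m (mod 2), equals a_r, where a_r = Σ_{j=1}^{r} ⌈(m+2−2j)/(n+1)⌉ if 1 ≤ r ≤ ⌊(n+1)/2⌋ and a_r = Σ_{j=1}^{n+1−r} ⌈(m+2−2j)/(n+1)⌉ if ⌊(n+1)/2⌋ < r ≤ n. -/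
/-!
Write `b = n + 1` and `m = b q + ρ` with `0 ≤ ρ < b`, and put `c = ⌈ρ / 2⌉`. For `2r ≤ b` the
`j`-th ceiling is `q + 1` when `2j ≤ ρ + 1` and `q` otherwise, so the ceiling sum is
`q r + min r c`. On the other side, with `t = i + m` and `s = b - 2r ≥ 0`, twice a value is
`t + s k̂ ≥ t - s|k̂|`, which is at least `m - s q = 2qr + ρ` when `|k̂| ≤ q` (using `t ≥ m`) and at
least `2r|k̂| ≥ 2r(q + 1)` otherwise (using `t ≥ b|k̂|`); the bound is attained at `k̂ = -q` or
`k̂ = -(q + 1)`. The case `2r > b` reduces to `b - r` under `k̂ ↦ -k̂`.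
-/

lemma Int.ceil_intCast_div_eq {K : Type*} [Field K] [LinearOrder K] [IsStrictOrderedRing K]
    [FloorRing K] {a b z : ℤ} (hb : 0 < b) (hlt : b * (z - 1) < a) (hle : a ≤ b * z) :
    ⌈(a : K) / b⌉ = z := by
  have hb' : (0 : K) < b := by exact_mod_cast hb
  rw [Int.ceil_eq_iff, lt_div_iff₀ hb', div_le_iff₀ hb', mul_comm, mul_comm (z : K)]
  exact ⟨by exact_mod_cast hlt, by exact_mod_cast hle⟩

lemma ceil_sub_two_mul_div_eq {b j : ℤ} (m : ℤ) (hb : 0 < b) (hj : 1 ≤ j) (hjb : 2 * j ≤ b) :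
    ⌈((m + 2 - 2 * j : ℤ) : ℚ) / b⌉ = m / b + if 2 * j ≤ m % b + 1 then 1 else 0 := by
  have hm := Int.mul_ediv_add_emod m b
  have hρ₀ := Int.emod_nonneg m hb.ne'
  have hρb := Int.emod_lt_of_pos m hb
  apply Int.ceil_intCast_div_eq hb <;> split_ifs <;> linarith

lemma sum_Icc_ceil_sub_two_mul_div {b r : ℤ} (m : ℤ) (hb : 0 < b) (hr : 0 ≤ r) (h2r : 2 * r ≤ b) :
    ∑ j ∈ Finset.Icc (1 : ℤ) r, ⌈((m + 2 - 2 * j : ℤ) : ℚ) / b⌉ =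
      m / b * r + min r ((m % b + 1) / 2) := by
  have hfilter : (Finset.Icc 1 r).filter (fun j => 2 * j ≤ m % b + 1) =
      Finset.Icc 1 (min r ((m % b + 1) / 2)) := by
    ext j
    simp only [Finset.mem_filter, Finset.mem_Icc]
    omega
  rw [Finset.sum_congr rfl fun j hj => ceil_sub_two_mul_div_eq m hb (Finset.mem_Icc.1 hj).1
      (by linarith [(Finset.mem_Icc.1 hj).2]),
    Finset.sum_add_distrib, Finset.sum_boole, hfilter, Finset.sum_const, nsmul_eq_mul, Int.card_Icc,
    Int.card_Icc]
  have hc : 0 ≤ (m % b + 1) / 2 := by have := Int.emod_nonneg m hb.ne'; omega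
  simp only [add_sub_cancel_right, Int.toNat_of_nonneg hr,
    Int.toNat_of_nonneg (le_min hr hc)]
  ring

def poleOrders (b m r : ℤ) : Set ℤ :=
  {v | ∃ i k : ℤ, 0 ≤ i ∧ b * |k| ≤ i + m ∧ 2 ∣ (b * k - (i + m)) ∧
    2 * v = (i + m) + (b - 2 * r) * k}

lemma poleOrders_subset_sub_right (b m r : ℤ) : poleOrders b m r ⊆ poleOrders b m (b - r) := by
  rintro v ⟨i, k, hi, hk, ⟨d, hd⟩, hv⟩
  exact ⟨i, -k, hi, by rwa [abs_neg], ⟨-d - (i + m), by linear_combination -hd⟩,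
    by linear_combination hv⟩

lemma poleOrders_sub_right (b m r : ℤ) : poleOrders b m (b - r) = poleOrders b m r := by
  refine Set.Subset.antisymm ?_ (poleOrders_subset_sub_right b m r)
  simpa only [sub_sub_cancel] using poleOrders_subset_sub_right b m (b - r)

lemma mem_poleOrders {b m : ℤ} (r : ℤ) (hb : 0 < b) (hm : 0 ≤ m) :
    m / b * r + min r ((m % b + 1) / 2) ∈ poleOrders b m r := by
  have hmq := Int.mul_ediv_add_emod m b
  have hq : 0 ≤ m / b := Int.ediv_nonneg hm hb.le
  have hρ₀ := Int.emod_nonneg m hb.ne'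
  have hρb := Int.emod_lt_of_pos m hb
  have hc : 2 * ((m % b + 1) / 2) = m % b + m % b % 2 := by omega
  rcases le_total ((m % b + 1) / 2) r with hcr | hrc
  · rw [min_eq_right hcr]
    refine ⟨m % b % 2, -(m / b), by omega, ?_, ⟨-(b * (m / b)) - (m % b + 1) / 2, ?_⟩, ?_⟩
    · rw [abs_neg, abs_of_nonneg hq]
      omega
    · linear_combination hmq + hc
    · linear_combination hmq + hc
  · rw [min_eq_left hrc]
    refine ⟨b * (m / b + 1) - m, -(m / b + 1), by linarith, ?_, ⟨-(b * (m / b + 1)), by ring⟩,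
      by ring⟩
    rw [abs_neg, abs_of_nonneg (by omega)]
    linarith

lemma le_of_mem_poleOrders {b m r v : ℤ} (hr : 0 ≤ r) (h2r : 2 * r ≤ b)
    (hv : v ∈ poleOrders b m r) : m / b * r + min r ((m % b + 1) / 2) ≤ v := by
  obtain ⟨i, k, hi, hk, -, hv⟩ := hv
  have hmq := Int.mul_ediv_add_emod m b
  have hsk : -((b - 2 * r) * |k|) ≤ (b - 2 * r) * k := by
    rw [← mul_neg]
    exact mul_le_mul_of_nonneg_left (neg_abs_le k) (by omega)
  rcases le_or_gt |k| (m / b) with hkq | hqk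
  · have : (b - 2 * r) * |k| ≤ (b - 2 * r) * (m / b) :=
      mul_le_mul_of_nonneg_left hkq (by omega)
    have : 2 * (m / b * r) + m % b ≤ 2 * v := by linarith
    omega
  · have : 2 * r * (m / b + 1) ≤ 2 * r * |k| := mul_le_mul_of_nonneg_left hqk (by omega)
    have : 2 * (m / b * r + r) ≤ 2 * v := by linarith
    omega

lemma isLeast_poleOrders {b m r : ℤ} (hb : 0 < b) (hm : 0 ≤ m) (hr : 0 ≤ r) (h2r : 2 * r ≤ b) :
    IsLeast (poleOrders b m r) (m / b * r + min r ((m % b + 1) / 2)) :=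
  ⟨mem_poleOrders r hb hm, fun _ hv => le_of_mem_poleOrders hr h2r hv⟩

theorem min_pole_order_general (n m r : ℤ) (hm : 0 ≤ m)
    (hr₁ : 1 ≤ r) (hr₂ : r ≤ n) :
    IsLeast
      {v : ℤ | ∃ i khat : ℤ, 0 ≤ i ∧ (n + 1) * |khat| ≤ i + m ∧
        (2 : ℤ) ∣ ((n + 1) * khat - (i + m)) ∧
        2 * v = (i + m) + ((n + 1) - 2 * r) * khat}
      (if r ≤ (n + 1) / 2 then
        ∑ j ∈ Finset.Icc (1 : ℤ) r, ⌈((m + 2 - 2 * j : ℤ) : ℚ) / ((n : ℚ) + 1)⌉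
      else
        ∑ j ∈ Finset.Icc (1 : ℤ) (n + 1 - r),
          ⌈((m + 2 - 2 * j : ℤ) : ℚ) / ((n : ℚ) + 1)⌉) := by
  have hb : 0 < n + 1 := by omega
  change IsLeast (poleOrders (n + 1) m r) _
  rw [show (n : ℚ) + 1 = ((n + 1 : ℤ) : ℚ) by push_cast; rfl]
  split_ifs with h
  · rw [sum_Icc_ceil_sub_two_mul_div m hb (by omega) (by omega)]
    exact isLeast_poleOrders hb hm (by omega) (by omega)
  · rw [sum_Icc_ceil_sub_two_mul_div m hb (by omega) (by omega), ← poleOrders_sub_right]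
    exact isLeast_poleOrders hb hm (by omega) (by omega)

/-- The minimum of `(i+m)/2 + ((n+1)/2 - r)k̂` over integer pairs `(k̂, i)` with
`i ≥ 0`, `(n+1)|k̂| ≤ i+m` and `(n+1)k̂ ≡ i+m (mod 2)` equals the ceiling sum
`a_r` from Theorem 3(a). -/
theorem min_pole_order (n m r : ℤ) (hn : 1 ≤ n) (hm : 0 ≤ m)
    (hr₁ : 1 ≤ r) (hr₂ : r ≤ n) :
    IsLeast
      {v : ℤ | ∃ i khat : ℤ, 0 ≤ i ∧ (n + 1) * |khat| ≤ i + m ∧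
        (2 : ℤ) ∣ ((n + 1) * khat - (i + m)) ∧
        2 * v = (i + m) + ((n + 1) - 2 * r) * khat}
      (if r ≤ (n + 1) / 2 then
        ∑ j ∈ Finset.Icc (1 : ℤ) r, ⌈((m + 2 - 2 * j : ℤ) : ℚ) / ((n : ℚ) + 1)⌉
      else
        ∑ j ∈ Finset.Icc (1 : ℤ) (n + 1 - r),
          ⌈((m + 2 - 2 * j : ℤ) : ℚ) / ((n : ℚ) + 1)⌉) :=
  min_pole_order_general n m r hm hr₁ hr₂
end

section
/- The sequence ℏ⁰_Ω(A_n) := (4/3)·Σ_{j=1}^{n} 1/j² − (12n⁴ + 65n³ + 117n² + 72n)/(6(n+1)²(n+2)²) is strictly increasing in n ≥ 1 and converges to 2π²/9 − 2 as n → ∞. -/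
open Filter Real

/-- The invariant `ℏ⁰_Ω(A_n)`. -/
noncomputable def hbarOmega (n : ℕ) : ℝ :=
  (4 / 3) * ∑ j ∈ Finset.Icc 1 n, (1 : ℝ) / (j : ℝ) ^ 2 -
    (12 * (n : ℝ) ^ 4 + 65 * (n : ℝ) ^ 3 + 117 * (n : ℝ) ^ 2 + 72 * n) /
      (6 * ((n : ℝ) + 1) ^ 2 * ((n : ℝ) + 2) ^ 2)

/-- The invariants `ℏ⁰_Ω(A_n)` strictly increase with `n` and converge to
`2π²/9 - 2`. -/
theorem hbarOmega_strictMono_and_tendsto :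
    (∀ n : ℕ, 1 ≤ n → hbarOmega n < hbarOmega (n + 1)) ∧
      Tendsto hbarOmega atTop (nhds (2 * π ^ 2 / 9 - 2)) := by
  constructor
  · intro n hn
    have hx : (0 : ℝ) ≤ (n : ℝ) := Nat.cast_nonneg n
    set x : ℝ := (n : ℝ) with hxdef
    have hsum : ∑ j ∈ Finset.Icc 1 (n + 1), (1 : ℝ) / (j : ℝ) ^ 2 =
        (∑ j ∈ Finset.Icc 1 n, (1 : ℝ) / (j : ℝ) ^ 2) + 1 / (x + 1) ^ 2 := by
      rw [Finset.sum_Icc_succ_top (by omega)]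
      push_cast
      ring
    unfold hbarOmega
    rw [hsum]
    push_cast
    have key : (12 * (x + 1) ^ 4 + 65 * (x + 1) ^ 3 + 117 * (x + 1) ^ 2 + 72 * (x + 1)) /
          (6 * (x + 1 + 1) ^ 2 * (x + 1 + 2) ^ 2) <
        (12 * x ^ 4 + 65 * x ^ 3 + 117 * x ^ 2 + 72 * x) /
          (6 * (x + 1) ^ 2 * (x + 2) ^ 2) + (4 / 3) * (1 / (x + 1) ^ 2) := by
      rw [← sub_pos]
      have hid : (12 * x ^ 4 + 65 * x ^ 3 + 117 * x ^ 2 + 72 * x) /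
            (6 * (x + 1) ^ 2 * (x + 2) ^ 2) + (4 / 3) * (1 / (x + 1) ^ 2) -
          (12 * (x + 1) ^ 4 + 65 * (x + 1) ^ 3 + 117 * (x + 1) ^ 2 + 72 * (x + 1)) /
            (6 * (x + 1 + 1) ^ 2 * (x + 1 + 2) ^ 2) =
          (x ^ 4 + 9 * x ^ 3 + 33 * x ^ 2 + 47 * x + 22) /
            (6 * (x + 1) ^ 2 * (x + 2) ^ 2 * (x + 3) ^ 2) := by
        have h1 : (x + 1 : ℝ) ≠ 0 := by positivity
        have h2 : (x + 2 : ℝ) ≠ 0 := by positivity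
        have h3 : (x + 3 : ℝ) ≠ 0 := by positivity
        field_simp
        ring
      rw [hid]
      have hnum : 0 < x ^ 4 + 9 * x ^ 3 + 33 * x ^ 2 + 47 * x + 22 := by
        have h4 := pow_nonneg hx 4
        have h3 := pow_nonneg hx 3
        have h2 := pow_nonneg hx 2
        nlinarith
      exact div_pos hnum (by positivity)
    linarith [key]
  · -- the rational part as a function of 1/n
    set g : ℝ → ℝ := fun x =>
      (12 + 65 * x + 117 * x ^ 2 + 72 * x ^ 3) / (6 * (1 + x) ^ 2 * (1 + 2 * x) ^ 2) with hg
    have hgc : ContinuousAt g 0 := by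
      apply ContinuousAt.div (by fun_prop) (by fun_prop)
      norm_num
    have hg0 : g 0 = 2 := by simp [hg]; norm_num
    have hf : Tendsto (fun n : ℕ => g (1 / (n : ℝ))) atTop (nhds 2) := by
      rw [← hg0]
      exact hgc.tendsto.comp tendsto_one_div_atTop_nhds_zero_nat
    have h0 : HasSum (fun n : ℕ => (1 : ℝ) / ((n : ℝ) + 1) ^ 2) (π ^ 2 / 6) := by
      have h : HasSum (fun n : ℕ => (1 : ℝ) / ((n + 1 : ℕ) : ℝ) ^ 2) (π ^ 2 / 6) :=
        (hasSum_nat_add_iff (f := fun n : ℕ => (1 : ℝ) / (n : ℝ) ^ 2) 1).2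
          (by simpa using hasSum_zeta_two)
      convert h using 2 with m
      push_cast
      ring
    have hIcc : ∀ n : ℕ, ∑ j ∈ Finset.Icc 1 n, (1 : ℝ) / (j : ℝ) ^ 2 =
        ∑ i ∈ Finset.range n, (1 : ℝ) / ((i : ℝ) + 1) ^ 2 := by
      intro n
      induction n with
      | zero => simp
      | succ k ih =>
        rw [Finset.sum_Icc_succ_top (by omega), Finset.sum_range_succ, ih]
        push_cast; ring
    have hS : Tendsto (fun n : ℕ => ∑ j ∈ Finset.Icc 1 n, (1 : ℝ) / (j : ℝ) ^ 2) atTop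
        (nhds (π ^ 2 / 6)) := by
      simp only [hIcc]
      exact h0.tendsto_sum_nat
    have hmain : Tendsto (fun n : ℕ =>
        (4 / 3) * (∑ j ∈ Finset.Icc 1 n, (1 : ℝ) / (j : ℝ) ^ 2) - g (1 / (n : ℝ))) atTop
        (nhds ((4 / 3) * (π ^ 2 / 6) - 2)) := (hS.const_mul (4/3)).sub hf
    have heq : ∀ᶠ n : ℕ in atTop, (4 / 3) * (∑ j ∈ Finset.Icc 1 n, (1 : ℝ) / (j : ℝ) ^ 2) -
        g (1 / (n : ℝ)) = hbarOmega n := by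
      filter_upwards [eventually_ge_atTop 1] with n hn
      have hx : (n : ℝ) ≠ 0 := by positivity
      unfold hbarOmega
      congr 1
      rw [hg]
      have h1 : ((n:ℝ) + 1) ^ 2 ≠ 0 := by positivity
      have h2 : ((n:ℝ) + 2) ^ 2 ≠ 0 := by positivity
      field_simp
    have := hmain.congr' heq
    convert this using 2
    ring
end
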